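/- arXiv:0704.0989 — 3 statements merged into one kernel-verified Lean document; each statement's English description precedes it below -/
import Mathlib

section
/- If H is a retract of a finitely presented group G (i.e. there is a group homomorphism ρ : G → H which is the identity on the subgroup H of G), then H is finitely presented. -/
/-- A group is finitely presented if it is isomorphic to a quotient of a finitely
generated free group by the normal closure of a finite set of relations. -/
def FinPresented (G : Type) [Group G] : Prop :=
  ∃ (n : ℕ) (rels : Finset (FreeGroup (Fin n))),
    Nonempty (PresentedGroup (rels : Set (FreeGroup (Fin n))) ≃* G)

/-!
Let `ι : H → G` be the inclusion and `e = ι ∘ ρ` the induced idempotent endomorphism of `G`.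
If `S` generates `G`, the kernel of `ρ` is the normal closure of the elements `g⁻¹ e(g)`, `g ∈ S`:
modulo these, `e` agrees with the identity on `S`, hence everywhere, and `e` kills `ker ρ`.
A finite presentation of `G` together with these finitely many extra relations presents `H`.
-/

open Function Subgroup

namespace MonoidHom

variable {G K : Type*} [Group G] [Group K]

theorem ker_eq_normalClosure_of_leftInverse (ρ : G →* K) (ι : K →* G) (hρι : LeftInverse ρ ι)
    {S : Set G} (hS : closure S = ⊤) :
    ρ.ker = normalClosure ((fun g => g⁻¹ * ι (ρ g)) '' S) := by
  set M := normalClosure ((fun g => g⁻¹ * ι (ρ g)) '' S)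
  refine le_antisymm (fun w hw => ?_) (normalClosure_le_normal ?_)
  · have hretract : (QuotientGroup.mk' M).comp (ι.comp ρ) = QuotientGroup.mk' M := by
      refine eq_of_eqOn_dense hS fun g hg => ?_
      refine (QuotientGroup.eq.mpr ?_).symm
      exact subset_normalClosure ⟨g, hg, rfl⟩
    have hw' : ρ w = 1 := hw
    rw [← QuotientGroup.ker_mk' M, mem_ker, ← hretract, comp_apply, comp_apply, hw', map_one,
      map_one]
  · rintro _ ⟨g, -, rfl⟩
    simp [hρι (ρ g)]

theorem ker_isFinitelyNormallyGenerated_of_leftInverse [Group.FG G] (ρ : G →* K) (ι : K →* G)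
    (hρι : LeftInverse ρ ι) : ρ.ker.IsFinitelyNormallyGenerated := by
  obtain ⟨S, hS, hSfin⟩ := Group.fg_iff.mp ‹Group.FG G›
  exact ⟨_, hSfin.image _, (ker_eq_normalClosure_of_leftInverse ρ ι hρι hS).symm⟩

end MonoidHom

namespace Group.IsFinitelyPresented

variable {G K : Type*} [Group G] [Group K]

instance (priority := 100) fg [h : IsFinitelyPresented G] : Group.FG G := by
  obtain ⟨n, φ, hφ, -⟩ := h
  exact Group.fg_of_surjective hφ

theorem of_leftInverse [IsFinitelyPresented G] (ρ : G →* K) (ι : K →* G)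
    (hρι : LeftInverse ρ ι) : IsFinitelyPresented K :=
  of_surjective ρ hρι.surjective (ρ.ker_isFinitelyNormallyGenerated_of_leftInverse ι hρι)

end Group.IsFinitelyPresented

theorem finPresented_iff_isFinitelyPresented (G : Type) [Group G] :
    FinPresented G ↔ Group.IsFinitelyPresented G := by
  constructor
  · rintro ⟨n, rels, ⟨e⟩⟩
    exact Group.IsFinitelyPresented.equiv e
  · intro h
    obtain ⟨n, s, hs, ⟨e⟩⟩ := Group.IsFinitelyPresented.exists_mulEquiv_presentedGroup (G := G)
    exact ⟨n, hs.toFinset, ⟨by rw [hs.coe_toFinset]; exact e.symm⟩⟩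

theorem retract_of_finitely_presented {G : Type} [Group G] (H : Subgroup G)
    (hG : FinPresented G) (ρ : G →* H) (hρ : ∀ h : H, ρ (h : G) = h) :
    FinPresented H := by
  rw [finPresented_iff_isFinitelyPresented] at hG ⊢
  exact Group.IsFinitelyPresented.of_leftInverse ρ H.subtype hρ
end

section
/- If G is a fully residually free group and g ∈ G is nontrivial, then the centralizer Z(g) of g in G is commutative (abelian). -/
/-!
By Nielsen–Schreier, subgroups of free groups are free. If `z ≠ 1` commutes with a generator
`xᵢ` of a free group, then `⟨z, xᵢ⟩` is free and abelian, hence cyclic, and `xᵢ` generates it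
since its exponent sum is `1`; so `z` is a power of every generator, which leaves room for only
one generator. Thus a free group with a nontrivial central element is cyclic; applied to the
centralizer of `x ≠ 1`, this makes commutation transitive on nontrivial elements of free groups.
A homomorphism to a free group keeping both `g` and `a b (b a)⁻¹` nontrivial carries this to `G`.
-/

/-- A group `G` is fully residually free if for every finite set `X` of nontrivial
elements there is a homomorphism to a free group killing no element of `X`. -/
def FullyResiduallyFree (G : Type*) [Group G] : Prop :=
  ∀ X : Finset G, (1 : G) ∉ X →
    ∃ (ι : Type) (f : G →* FreeGroup ι), ∀ x ∈ X, f x ≠ 1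

namespace FreeGroup

variable {α : Type*}

theorem not_commute_of_of_ne {i j : α} (h : i ≠ j) : ¬Commute (of i) (of j) := by
  classical
  intro hc
  let f : FreeGroup α →* Equiv.Perm (Fin 3) :=
    FreeGroup.lift fun k => if k = i then Equiv.swap 0 1 else Equiv.swap 1 2
  have hswap : Equiv.swap (0 : Fin 3) 1 * Equiv.swap 1 2 = Equiv.swap 1 2 * Equiv.swap 0 1 := by
    simpa [f, h.symm] using (hc.map f).eq
  exact absurd hswap (by decide)

instance isCyclic_of_subsingleton [Subsingleton α] : IsCyclic (FreeGroup α) := by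
  refine isCyclic_iff_exists_zpowers_eq_top.2 ?_
  obtain hempty | ⟨g, hg⟩ := (Set.subsingleton_range (of : α → FreeGroup α)).eq_empty_or_singleton
  · refine ⟨1, ?_⟩
    rw [← closure_range_of, hempty]
    simp
  · refine ⟨g, ?_⟩
    rw [← closure_range_of, hg, Subgroup.zpowers_eq_closure]

end FreeGroup

namespace IsFreeGroup

variable {G : Type*} [Group G] [IsFreeGroup G]

theorem isCyclic_of_subsingleton_generators [Subsingleton (Generators G)] : IsCyclic G :=
  isCyclic_of_surjective (toFreeGroup G).symm (toFreeGroup G).symm.surjective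

theorem isCyclic_of_isMulCommutative [IsMulCommutative G] : IsCyclic G := by
  have : Subsingleton (Generators G) := by
    refine ⟨fun i j => by_contra fun hij => FreeGroup.not_commute_of_of_ne hij ?_⟩
    simpa [of] using (show Commute (of i) (of j) from mul_comm' _ _).map (toFreeGroup G)
  exact isCyclic_of_subsingleton_generators

end IsFreeGroup

namespace FreeGroup

variable {α : Type*}

theorem mem_zpowers_of_commute_of {z : FreeGroup α} {i : α} (h : Commute z (of i)) :
    z ∈ Subgroup.zpowers (of i) := by
  let H := Subgroup.closure {z, of i}
  have : IsMulCommutative H := Subgroup.isMulCommutative_closure (by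
    simp only [Set.mem_insert_iff, Set.mem_singleton_iff]
    rintro _ (rfl | rfl) _ (rfl | rfl) <;> first | rfl | exact h.eq | exact h.symm.eq)
  obtain ⟨c, hc⟩ := H.isCyclic_iff_exists_zpowers_eq_top.1 IsFreeGroup.isCyclic_of_isMulCommutative
  obtain ⟨k, hk⟩ : ∃ k : ℤ, c ^ k = of i :=
    Subgroup.mem_zpowers_iff.1 (hc ▸ Subgroup.subset_closure (by simp))
  -- the exponent sum of `of i` is `1`, so `k = ±1`
  have hunit := congrArg (fun x => (lift fun _ => Multiplicative.ofAdd (1 : ℤ)) x |>.toAdd) hk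
  simp only [map_zpow, toAdd_zpow, lift_apply_of, toAdd_ofAdd, smul_eq_mul] at hunit
  have hz : z ∈ Subgroup.zpowers c := hc ▸ Subgroup.subset_closure (by simp)
  rcases Int.eq_one_or_neg_one_of_mul_eq_one hunit with rfl | rfl
  · rw [zpow_one] at hk
    rwa [← hk]
  · rw [zpow_neg_one, inv_eq_iff_eq_inv] at hk
    rwa [hk, Subgroup.zpowers_inv] at hz

theorem subsingleton_of_forall_commute_of {z : FreeGroup α} (hz : z ≠ 1)
    (h : ∀ i, Commute z (of i)) : Subsingleton α := by
  classical
  refine ⟨fun i j => by_contra fun hij => hz ?_⟩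
  obtain ⟨m, rfl⟩ := Subgroup.mem_zpowers_iff.1 (mem_zpowers_of_commute_of (h i))
  obtain ⟨n, hn⟩ := Subgroup.mem_zpowers_iff.1 (mem_zpowers_of_commute_of (h j))
  have hm : 0 = m := by
    simpa [Ne.symm hij] using
      congrArg (fun x => (lift (Pi.mulSingle i (Multiplicative.ofAdd (1 : ℤ)))) x |>.toAdd) hn
  rw [← hm, zpow_zero]

end FreeGroup

namespace IsFreeGroup

variable {G : Type*} [Group G] [IsFreeGroup G]

theorem isCyclic_of_forall_commute {z : G} (hz : z ≠ 1) (h : ∀ g, Commute z g) : IsCyclic G := by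
  have : Subsingleton (Generators G) := by
    refine FreeGroup.subsingleton_of_forall_commute_of (z := toFreeGroup G z) (by simpa using hz)
      fun i => ?_
    simpa [of] using (h (of i)).map (toFreeGroup G)
  exact isCyclic_of_subsingleton_generators

theorem commute_trans {x u v : G} (hx : x ≠ 1) (hux : Commute u x) (hxv : Commute x v) :
    Commute u v := by
  let C := Subgroup.centralizer {x}
  have hC : ∀ {w}, Commute w x → w ∈ C := fun hw => Subgroup.mem_centralizer_singleton_iff.2 hw.eq
  have : IsCyclic C := isCyclic_of_forall_commute (z := ⟨x, hC (Commute.refl x)⟩)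
    (by simpa using hx) fun c => Subtype.ext (Subgroup.mem_centralizer_singleton_iff.1 c.2).symm
  exact congrArg Subtype.val (mul_comm' (⟨u, hC hux⟩ : C) ⟨v, hC hxv.symm⟩)

end IsFreeGroup

theorem centralizer_abelian_of_fullyResiduallyFree {G : Type*} [Group G]
    (hG : FullyResiduallyFree G) (g : G) (hg : g ≠ 1) :
    ∀ a ∈ Subgroup.centralizer ({g} : Set G), ∀ b ∈ Subgroup.centralizer ({g} : Set G),
      a * b = b * a := by
  classical
  intro a ha b hb
  by_contra hab
  have hcomm : a * b * (b * a)⁻¹ ≠ 1 := mul_inv_eq_one.not.2 hab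
  obtain ⟨ι, f, hf⟩ := hG {g, a * b * (b * a)⁻¹} (by
    simp only [Finset.mem_insert, Finset.mem_singleton, not_or]
    exact ⟨hg.symm, hcomm.symm⟩)
  have hag : Commute a g := Subgroup.mem_centralizer_singleton_iff.1 ha
  have hgb : Commute g b := (Subgroup.mem_centralizer_singleton_iff.1 hb).symm
  have hfab : Commute (f a) (f b) :=
    IsFreeGroup.commute_trans (hf g (Finset.mem_insert_self _ _)) (hag.map f) (hgb.map f)
  exact hf _ (Finset.mem_insert_of_mem (Finset.mem_singleton_self _))
    (by rw [map_mul, map_inv, map_mul, map_mul, hfab.eq, mul_inv_cancel])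
end

section
/- A finitely generated residually finite group with decidable word problem in which every element has a computable 'finite quotient witness' is Hopfian: every surjective endomorphism of G is an isomorphism. -/
theorem malcev_hopfian {G : Type*} [Group G] [DecidableEq G]
    (hfg : Group.FG G)
    (hRF : ∀ g : G, g ≠ 1 →
      ∃ (Q : Type) (_ : Group Q) (_ : Finite Q) (ψ : G →* Q), ψ g ≠ 1) :
    ∀ φ : G →* G, Function.Surjective φ → Function.Injective φ := by
  intro φ hφ
  by_contra hinj
  -- extract a nontrivial kernel element
  rw [Function.Injective] at hinj
  push_neg at hinj
  obtain ⟨a, b, hab, hne⟩ := hinj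
  set g := a * b⁻¹ with hgdef
  have hg1 : g ≠ 1 := by
    intro h
    exact hne (by rwa [mul_inv_eq_one] at h)
  have hgker : φ g = 1 := by
    simp [hgdef, map_mul, map_inv, hab]
  obtain ⟨Q, _, _, ψ, hψ⟩ := hRF g hg1
  -- Hom(G, Q) is finite since G is finitely generated and Q is finite
  obtain ⟨S, hS, hSfin⟩ := Group.fg_iff.mp hfg
  haveI : Finite S := hSfin.to_subtype
  haveI : Finite (G →* Q) := by
    refine Finite.of_injective (fun χ => (fun s : S => χ s)) ?_
    intro χ χ' h
    ext x
    have hx : x ∈ Subgroup.closure S := hS ▸ Subgroup.mem_top x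
    induction hx using Subgroup.closure_induction with
    | mem y hy => exact congrFun h ⟨y, hy⟩
    | one => simp
    | mul p q _ _ hp hq => simp [map_mul, hp, hq]
    | inv p _ hp => simp [map_inv, hp]
  -- precomposition with the surjection φ is injective, hence surjective
  have hcomp : Function.Injective (fun χ : G →* Q => χ.comp φ) := by
    intro χ χ' h
    ext x
    obtain ⟨y, rfl⟩ := hφ x
    exact DFunLike.congr_fun h y
  have hsurj : Function.Surjective (fun χ : G →* Q => χ.comp φ) :=
    Finite.surjective_of_injective hcomp
  obtain ⟨χ, hχ⟩ := hsurj ψ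
  have : ψ g = 1 := by
    rw [← hχ]
    simp [MonoidHom.comp_apply, hgker]
  exact hψ this
end
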